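/- The gnomonic map G(x) = (ℓ·Id + 2x·t)/√(ℓ²+r²) and stereographic map H(x) = ((ℓ²-r²)Id + 4ℓ x·t)/(ℓ²+r²), defined for x ∈ ℝ^{1,2} with r² = (x⁰)² - (x¹)² - (x²)² > -ℓ², satisfy H = G² and both take values in SU(1,1). -/

import Mathlib

/-!
With `X = 2 x·t`, the generators `tₐ` satisfy Clifford relations, so `X² = -r²` and
`τ₃ Xᴴ = -X τ₃` (i.e. `X ∈ su(1,1)`). Hence `N = ℓ + X` satisfies `N² = (ℓ² - r²) + 2ℓX`,
which is `H = G²` after normalisation, and `N τ₃ Nᴴ = (ℓ² + r²) τ₃`, `det N = ℓ² + r²`, which put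
`G = N / √(ℓ² + r²)` in `SU(1,1)`. Then `H = G²` lies in `SU(1,1)` as a product.
-/

open Complex Matrix

noncomputable def τ1 : Matrix (Fin 2) (Fin 2) ℂ := !![0, 1; 1, 0]
noncomputable def τ2 : Matrix (Fin 2) (Fin 2) ℂ := !![0, -Complex.I; Complex.I, 0]
noncomputable def τ3 : Matrix (Fin 2) (Fin 2) ℂ := !![1, 0; 0, -1]

noncomputable def tgen : Fin 3 → Matrix (Fin 2) (Fin 2) ℂ :=
  ![(Complex.I / 2) • τ3, (-(1 : ℂ) / 2) • τ2, ((1 : ℂ) / 2) • τ1]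

/-- x·t = x⁰t₀ + x¹t₁ + x²t₂. -/
noncomputable def xdott (x : Fin 3 → ℝ) : Matrix (Fin 2) (Fin 2) ℂ :=
  ∑ i, ((x i : ℝ) : ℂ) • tgen i

/-- Lorentzian length squared r² = (x⁰)² - (x¹)² - (x²)². -/
def r2 (x : Fin 3 → ℝ) : ℝ := x 0 ^ 2 - x 1 ^ 2 - x 2 ^ 2

/-- The gnomonic map G(x) = (ℓ·Id + 2x·t)/√(ℓ²+r²). -/
noncomputable def Gmap (ℓ : ℝ) (x : Fin 3 → ℝ) : Matrix (Fin 2) (Fin 2) ℂ :=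
  (((1 / Real.sqrt (ℓ ^ 2 + r2 x) : ℝ) : ℂ)) • ((ℓ : ℂ) • (1 : Matrix (Fin 2) (Fin 2) ℂ) +
    (2 : ℂ) • xdott x)

/-- The stereographic map H(x) = ((ℓ²-r²)·Id + 4ℓx·t)/(ℓ²+r²). -/
noncomputable def Hmap (ℓ : ℝ) (x : Fin 3 → ℝ) : Matrix (Fin 2) (Fin 2) ℂ :=
  (((1 / (ℓ ^ 2 + r2 x) : ℝ) : ℂ)) • (((ℓ ^ 2 - r2 x : ℝ) : ℂ) • (1 : Matrix (Fin 2) (Fin 2) ℂ) +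
    ((4 * ℓ : ℝ) : ℂ) • xdott x)

section CliffordElement

variable {n : Type*} [Fintype n] [DecidableEq n] {X J : Matrix n n ℂ} {ρ : ℂ}

theorem smul_one_add_mul_self (hX : X * X = -ρ • 1) (s : ℂ) :
    (s • 1 + X) * (s • 1 + X) = (s ^ 2 - ρ) • 1 + (2 * s) • X := by
  simp only [add_mul, mul_add, Matrix.smul_mul, Matrix.mul_smul, one_mul, mul_one, hX, smul_smul]
  module

theorem smul_one_add_mul_mul_conjTranspose (hX : X * X = -ρ • 1) (hJ : J * Xᴴ = -(X * J))
    (s : ℝ) : ((s : ℂ) • 1 + X) * J * ((s : ℂ) • 1 + X)ᴴ = ((s : ℂ) ^ 2 + ρ) • J := by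
  have hXJX : X * J * Xᴴ = ρ • J := by
    rw [Matrix.mul_assoc, hJ, Matrix.mul_neg, ← Matrix.mul_assoc, hX]
    simp
  simp only [conjTranspose_add, conjTranspose_smul, conjTranspose_one, Complex.star_def,
    Complex.conj_ofReal, add_mul, mul_add, Matrix.smul_mul, Matrix.mul_smul, smul_smul, one_mul, mul_one, hXJX]
  rw [hJ]
  module

end CliffordElement

theorem mul_mul_conjTranspose_mul_eq {n : Type*} [Fintype n] {A B J : Matrix n n ℂ}
    (hA : A * J * Aᴴ = J) (hB : B * J * Bᴴ = J) : A * B * J * (A * B)ᴴ = J := by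
  calc A * B * J * (A * B)ᴴ = A * (B * J * Bᴴ) * Aᴴ := by
        simp only [conjTranspose_mul, Matrix.mul_assoc]
    _ = J := by rw [hB, hA]

theorem two_smul_xdott (x : Fin 3 → ℝ) :
    (2 : ℂ) • xdott x = !![x 0 * I, x 2 + x 1 * I; x 2 - x 1 * I, -(x 0 * I)] := by
  ext i j
  fin_cases i <;> fin_cases j <;>
    simp [xdott, tgen, τ1, τ2, τ3, Fin.sum_univ_three] <;> ring

theorem two_smul_xdott_mul_self (x : Fin 3 → ℝ) :
    (2 : ℂ) • xdott x * (2 : ℂ) • xdott x = -(r2 x : ℂ) • 1 := by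
  rw [two_smul_xdott]
  ext i j
  fin_cases i <;> fin_cases j <;>
    simp [mul_apply, Fin.sum_univ_two, r2] <;> ring_nf <;> simp [I_sq] <;> ring

theorem tau3_mul_conjTranspose_two_smul_xdott (x : Fin 3 → ℝ) :
    τ3 * ((2 : ℂ) • xdott x)ᴴ = -((2 : ℂ) • xdott x * τ3) := by
  rw [two_smul_xdott]
  ext i j
  fin_cases i <;> fin_cases j <;>
    simp [mul_apply, Fin.sum_univ_two, τ3]; ring

theorem det_smul_one_add_two_smul_xdott (s : ℂ) (x : Fin 3 → ℝ) :
    (s • 1 + (2 : ℂ) • xdott x).det = s ^ 2 + r2 x := by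
  rw [two_smul_xdott, det_fin_two]
  simp [r2]
  ring_nf
  simp [I_sq]
  ring

theorem ofReal_one_div_sqrt_mul_self {D : ℝ} (hD : 0 ≤ D) :
    ((1 / √D : ℝ) : ℂ) * ((1 / √D : ℝ) : ℂ) = ((1 / D : ℝ) : ℂ) := by
  norm_cast
  rw [div_mul_div_comm, one_mul, Real.mul_self_sqrt hD]

section GnomonicMap

variable {ℓ : ℝ} {x : Fin 3 → ℝ}

theorem Gmap_mul_self (hD : 0 < ℓ ^ 2 + r2 x) : Gmap ℓ x * Gmap ℓ x = Hmap ℓ x := by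
  rw [Gmap, Hmap, smul_mul_smul, ofReal_one_div_sqrt_mul_self hD.le,
    smul_one_add_mul_self (two_smul_xdott_mul_self x), smul_smul]
  push_cast
  ring_nf

theorem Gmap_mul_tau3_mul_conjTranspose (hD : 0 < ℓ ^ 2 + r2 x) :
    Gmap ℓ x * τ3 * (Gmap ℓ x)ᴴ = τ3 := by
  simp only [Gmap, conjTranspose_smul, Complex.star_def, Complex.conj_ofReal, Matrix.smul_mul,
    Matrix.mul_smul, smul_smul]
  rw [smul_one_add_mul_mul_conjTranspose (two_smul_xdott_mul_self x)
      (tau3_mul_conjTranspose_two_smul_xdott x), smul_smul, ofReal_one_div_sqrt_mul_self hD.le]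
  norm_cast
  rw [one_div_mul_cancel hD.ne', one_smul]

theorem det_Gmap (hD : 0 < ℓ ^ 2 + r2 x) : (Gmap ℓ x).det = 1 := by
  rw [Gmap, det_smul, det_smul_one_add_two_smul_xdott, Fintype.card_fin, sq,
    ofReal_one_div_sqrt_mul_self hD.le]
  exact_mod_cast one_div_mul_cancel hD.ne'

end GnomonicMap

theorem gnomonic_stereographic_maps_general (ℓ : ℝ) :
    ∀ x : Fin 3 → ℝ, r2 x > -ℓ ^ 2 →
      Hmap ℓ x = Gmap ℓ x * Gmap ℓ x ∧
      (Gmap ℓ x * τ3 * (Gmap ℓ x)ᴴ = τ3 ∧ (Gmap ℓ x).det = 1) ∧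
      (Hmap ℓ x * τ3 * (Hmap ℓ x)ᴴ = τ3 ∧ (Hmap ℓ x).det = 1) := by
  intro x hx
  have hD : 0 < ℓ ^ 2 + r2 x := by linarith
  have hG := Gmap_mul_tau3_mul_conjTranspose hD
  have hdet := det_Gmap hD
  rw [← Gmap_mul_self hD]
  exact ⟨rfl, ⟨hG, hdet⟩, mul_mul_conjTranspose_mul_eq hG hG, by rw [det_mul, hdet, one_mul]⟩

/-- On I_ℓ = {x : r² > -ℓ²}, the gnomonic and stereographic maps satisfy H = G² and
both take values in SU(1,1). -/
theorem gnomonic_stereographic_maps (ℓ : ℝ) (hℓ : 0 < ℓ) :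
    ∀ x : Fin 3 → ℝ, r2 x > -ℓ ^ 2 →
      Hmap ℓ x = Gmap ℓ x * Gmap ℓ x ∧
      (Gmap ℓ x * τ3 * (Gmap ℓ x)ᴴ = τ3 ∧ (Gmap ℓ x).det = 1) ∧
      (Hmap ℓ x * τ3 * (Hmap ℓ x)ᴴ = τ3 ∧ (Hmap ℓ x).det = 1) :=
  gnomonic_stereographic_maps_general ℓ
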